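/- arXiv:1503.08127 — 5 statements merged into one kernel-verified Lean document; each statement's English description precedes it below -/
import Mathlib

section
/- If f and g are formal power series with integer coefficients, each primitive (i.e., the ideal generated by its coefficients is the unit ideal of ℤ), then the product f·g is also a primitive power series. -/
/-! Reduce modulo a maximal ideal `M` containing all coefficients of `f * g`: the images of
`f` and `g` in the integral domain `(R ⧸ M)⟦X⟧` multiply to zero, so one of them vanishes,
i.e. all coefficients of `f` or of `g` lie in the proper ideal `M`. -/

def PowerSeries.IsPrimitive (f : PowerSeries ℤ) : Prop :=
  Ideal.span (Set.range fun n => PowerSeries.coeff n f) = ⊤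

namespace PowerSeries

variable {R : Type*} [CommRing R]

theorem map_mk_eq_zero_iff (I : Ideal R) (f : R⟦X⟧) :
    map (Ideal.Quotient.mk I) f = 0 ↔ ∀ n, coeff n f ∈ I := by
  simp only [PowerSeries.ext_iff, coeff_map, map_zero, Ideal.Quotient.eq_zero_iff_mem]

theorem span_range_coeff_le_iff (I : Ideal R) (f : R⟦X⟧) :
    Ideal.span (Set.range fun n => coeff n f) ≤ I ↔ map (Ideal.Quotient.mk I) f = 0 := by
  rw [Ideal.span_le, Set.range_subset_iff, map_mk_eq_zero_iff]
  rfl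

theorem span_range_coeff_mul_eq_top {f g : R⟦X⟧}
    (hf : Ideal.span (Set.range fun n => coeff n f) = ⊤)
    (hg : Ideal.span (Set.range fun n => coeff n g) = ⊤) :
    Ideal.span (Set.range fun n => coeff n (f * g)) = ⊤ := by
  by_contra h
  obtain ⟨M, hM, hle⟩ := Ideal.exists_le_maximal _ h
  have hfg : map (Ideal.Quotient.mk M) f * map (Ideal.Quotient.mk M) g = 0 := by
    rw [← map_mul, ← span_range_coeff_le_iff]
    exact hle
  rcases mul_eq_zero.mp hfg with hf0 | hg0
  · exact hM.ne_top (top_unique (hf ▸ (span_range_coeff_le_iff M f).mpr hf0))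
  · exact hM.ne_top (top_unique (hg ▸ (span_range_coeff_le_iff M g).mpr hg0))

end PowerSeries

/-- Gauss' lemma for power series: the product of primitive power series is primitive. -/
theorem PowerSeries.IsPrimitive.mul {f g : PowerSeries ℤ}
    (hf : f.IsPrimitive) (hg : g.IsPrimitive) : (f * g).IsPrimitive :=
  PowerSeries.span_range_coeff_mul_eq_top hf hg
end

section
/- Let f, g ∈ ℚ[[x]] be power series with constant term 1, each having bounded denominator (i.e., there exist nonzero integers a, b with a·f ∈ ℤ[[x]] and b·g ∈ ℤ[[x]]). If f·g ∈ ℤ[[x]], then f ∈ ℤ[[x]] and g ∈ ℤ[[x]]. -/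
/-- A power series over `ℚ` has *bounded denominator* if some nonzero integer
multiple of it has integer coefficients. -/
def PowerSeries.HasBoundedDenominator (f : PowerSeries ℚ) : Prop :=
  ∃ d : ℤ, d ≠ 0 ∧ ∀ n : ℕ, ∃ z : ℤ, (d : ℚ) * PowerSeries.coeff n f = (z : ℚ)

/-- A power series over `ℚ` has integer coefficients. -/
def PowerSeries.HasIntegerCoeffs (f : PowerSeries ℚ) : Prop :=
  ∀ n : ℕ, ∃ z : ℤ, PowerSeries.coeff n f = (z : ℚ)

/-!
Write `f = F / a` and `g = G / b` with `F, G ∈ ℤ[[X]]` and `a, b` the least possible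
denominators. As `f` has constant term `1`, `F` has constant term `a`; so if a prime `p` divided
every coefficient of `F`, then `p ∣ a` and `F / p = (a / p) f` would contradict minimality. Hence no
prime constant divides `F` or `G`. Every prime `p` stays prime in `ℤ[[X]]`, because
`ℤ[[X]] / (p) ≅ 𝔽_p[[X]]` is a domain (Gauss' lemma), so no prime divides `F G = a b (f g)`
either, and `a b = 1`.
-/

namespace PowerSeries

theorem C_dvd_iff_map_mk_eq_zero {R : Type*} [CommRing R] (r : R) (F : R⟦X⟧) :
    C r ∣ F ↔ map (Ideal.Quotient.mk (Ideal.span {r})) F = 0 := by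
  constructor
  · rintro ⟨G, rfl⟩
    rw [map_mul, map_C, Ideal.Quotient.mk_singleton_self, map_zero, zero_mul]
  · intro h
    have hdvd : ∀ n, r ∣ coeff n F := fun n => by
      rw [← Ideal.Quotient.eq_zero_iff_dvd, ← coeff_map, h, map_zero]
    choose c hc using hdvd
    exact ⟨mk c, ext fun n => by rw [coeff_C_mul, coeff_mk, hc]⟩

theorem prime_C {R : Type*} [CommRing R] {p : R} (hp : Prime p) : Prime (C p : R⟦X⟧) := by
  have : (Ideal.span {p}).IsPrime := (Ideal.span_singleton_prime hp.ne_zero).mpr hp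
  refine ⟨(map_ne_zero_iff _ C_injective).mpr hp.ne_zero, ?_, fun F G hFG => ?_⟩
  · rw [isUnit_iff_constantCoeff, constantCoeff_C]
    exact hp.not_isUnit
  · simp only [C_dvd_iff_map_mk_eq_zero, map_mul] at hFG ⊢
    exact mul_eq_zero.mp hFG

theorem hasIntegerCoeffs_iff_exists_map_eq {f : ℚ⟦X⟧} :
    f.HasIntegerCoeffs ↔ ∃ F : ℤ⟦X⟧, map (Int.castRingHom ℚ) F = f := by
  constructor
  · intro h
    choose z hz using h
    exact ⟨mk z, ext fun n => by simp [hz]⟩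
  · rintro ⟨F, rfl⟩ n
    exact ⟨coeff n F, by simp⟩

theorem HasBoundedDenominator.exists_pos_nat {f : ℚ⟦X⟧} (hf : f.HasBoundedDenominator) :
    ∃ n : ℕ, 0 < n ∧ (C (n : ℚ) * f).HasIntegerCoeffs := by
  obtain ⟨d, hd, hdf⟩ := hf
  refine ⟨d.natAbs, Int.natAbs_pos.mpr hd, fun k => ?_⟩
  obtain ⟨z, hz⟩ := hdf k
  refine ⟨d.sign * z, ?_⟩
  rw [coeff_C_mul, Int.cast_mul, ← hz, ← mul_assoc, ← Int.cast_mul,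
    Int.sign_mul_self_eq_natAbs, Int.cast_natCast]

theorem HasBoundedDenominator.exists_primitive {f : ℚ⟦X⟧} (hf : f.HasBoundedDenominator)
    (hf1 : constantCoeff f = 1) :
    ∃ (n : ℕ) (F : ℤ⟦X⟧), map (Int.castRingHom ℚ) F = C (n : ℚ) * f ∧
      ∀ p : ℕ, p.Prime → ¬ C (p : ℤ) ∣ F := by
  classical
  have hex := hf.exists_pos_nat
  obtain ⟨hn, hnf⟩ := Nat.find_spec hex
  obtain ⟨F, hF⟩ := hasIntegerCoeffs_iff_exists_map_eq.mp hnf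
  refine ⟨Nat.find hex, F, hF, ?_⟩
  rintro p hp ⟨F', rfl⟩
  set n := Nat.find hex
  rw [map_mul, map_C, eq_intCast, Int.cast_natCast] at hF
  have hpn : p ∣ n := by
    have := congrArg (coeff 0) hF
    simp only [coeff_C_mul, coeff_map, coeff_zero_eq_constantCoeff_apply, hf1, mul_one,
      eq_intCast] at this
    exact Int.natCast_dvd_natCast.mp (Dvd.intro _ (by exact_mod_cast this))
  have hp0 : (p : ℚ) ≠ 0 := Nat.cast_ne_zero.mpr hp.ne_zero
  refine Nat.find_min hex (Nat.div_lt_self hn hp.one_lt) ⟨Nat.div_pos (Nat.le_of_dvd hn hpn) hp.pos,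
    hasIntegerCoeffs_iff_exists_map_eq.mpr ⟨F', ?_⟩⟩
  calc map (Int.castRingHom ℚ) F'
      = C (p : ℚ)⁻¹ * (C (p : ℚ) * map (Int.castRingHom ℚ) F') := by
        rw [← mul_assoc, ← map_mul, inv_mul_cancel₀ hp0, map_one, one_mul]
    _ = C ((n / p : ℕ) : ℚ) * f := by
        rw [hF, ← mul_assoc, ← map_mul, Nat.cast_div hpn hp0, div_eq_inv_mul]

end PowerSeries

open PowerSeries

/-- If `f, g ∈ ℚ[[x]]` have constant term `1` and bounded denominator, and `f·g` has
integer coefficients, then both `f` and `g` have integer coefficients. -/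
theorem integerCoeffs_of_mul_integerCoeffs (f g : PowerSeries ℚ)
    (hf1 : PowerSeries.constantCoeff f = 1) (hg1 : PowerSeries.constantCoeff g = 1)
    (hf : f.HasBoundedDenominator) (hg : g.HasBoundedDenominator)
    (hfg : (f * g).HasIntegerCoeffs) :
    f.HasIntegerCoeffs ∧ g.HasIntegerCoeffs := by
  obtain ⟨a, F, hF, hFprim⟩ := hf.exists_primitive hf1
  obtain ⟨b, G, hG, hGprim⟩ := hg.exists_primitive hg1
  obtain ⟨H, hH⟩ := hasIntegerCoeffs_iff_exists_map_eq.mp hfg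
  have hFG : F * G = C ((a * b : ℕ) : ℤ) * H := by
    apply map_injective (Int.castRingHom ℚ) Int.cast_injective
    rw [map_mul, map_mul, hF, hG, hH, map_C, eq_intCast, Int.cast_natCast, Nat.cast_mul, map_mul]
    ring
  have hab : a * b = 1 := by
    by_contra hab
    obtain ⟨p, hp, hpab⟩ := Nat.exists_prime_and_dvd hab
    have hpFG : C (p : ℤ) ∣ F * G :=
      hFG ▸ dvd_mul_of_dvd_left (map_dvd C (Int.natCast_dvd_natCast.mpr hpab)) H
    exact ((prime_C (Nat.prime_iff_prime_int.mp hp)).dvd_or_dvd hpFG).elim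
      (hFprim p hp) (hGprim p hp)
  obtain ⟨rfl, rfl⟩ := mul_eq_one.mp hab
  rw [Nat.cast_one, map_one, one_mul] at hF hG
  exact ⟨hasIntegerCoeffs_iff_exists_map_eq.mpr ⟨F, hF⟩,
    hasIntegerCoeffs_iff_exists_map_eq.mpr ⟨G, hG⟩⟩
end

section
/- For B, C in a field k of characteristic 0 with D := B³·(C⁴ − 8BC² − 3C³ + 16B² − 20BC + 3C² + B − C) ≠ 0, the Weierstrass equation Y² + (1−C)XY − BY = X³ − BX² defines an elliptic curve E over k, and the point P = (0,0) lies on E and does not have order 1, 2, or 3. -/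
/-!
`(0,0)` lies on the curve, and `D` is its discriminant, so the curve is elliptic and the point
is nonsingular. Since `B ≠ 0`, the tangent at `P = (0,0)` is the horizontal line `Y = 0`, which
meets the curve again at `X = B`: so `P ≠ -P`, i.e. `2P ≠ 0`, and `2P = (B, _)` has a different
`X`-coordinate from `P`, so `2P ≠ -P`, i.e. `3P ≠ 0`.
-/

/-- The Tate normal form curve `Y² + (1−C)XY − BY = X³ − BX²` over a field `k`. -/
def tateCurve {k : Type*} [CommRing k] (B C : k) : WeierstrassCurve k :=
  { a₁ := 1 - C, a₂ := -B, a₃ := -B, a₄ := 0, a₆ := 0 }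

namespace WeierstrassCurve.Affine.Point

variable {F : Type*} [Field F] [DecidableEq F] {W : Affine F} {x y : F}

lemma two_nsmul_some_ne_zero (h : W.Nonsingular x y) (hy : y ≠ W.negY x y) :
    2 • some x y h ≠ 0 := by
  rw [two_nsmul, add_self_of_Y_ne hy]
  exact some_ne_zero _

lemma three_nsmul_some_ne_zero (h : W.Nonsingular x y) (hy : y ≠ W.negY x y)
    (hx : W.addX x x (W.slope x x y y) ≠ x) : 3 • some x y h ≠ 0 := by
  rw [show 3 = 2 + 1 from rfl, add_nsmul, one_nsmul, two_nsmul, add_self_of_Y_ne hy,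
    add_of_X_ne hx]
  exact some_ne_zero _

end WeierstrassCurve.Affine.Point

section TateCurve

open WeierstrassCurve

variable {k : Type*}

lemma tateCurve_Δ [CommRing k] (B C : k) :
    (tateCurve B C).Δ = B ^ 3 * (C ^ 4 - 8 * B * C ^ 2 - 3 * C ^ 3 + 16 * B ^ 2 - 20 * B * C
      + 3 * C ^ 2 + B - C) := by
  simp only [Δ, b₂, b₄, b₆, b₈, tateCurve]
  ring

lemma tateCurve_equation_zero [CommRing k] (B C : k) :
    (tateCurve B C).toAffine.Equation 0 0 := by
  simp [Affine.equation_iff, tateCurve]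

lemma tateCurve_negY_zero [CommRing k] (B C : k) : (tateCurve B C).toAffine.negY 0 0 = B := by
  simp [Affine.negY, tateCurve]

lemma tateCurve_addX_double_zero [Field k] [DecidableEq k] {B : k} (C : k) (hB : B ≠ 0) :
    (tateCurve B C).toAffine.addX 0 0 ((tateCurve B C).toAffine.slope 0 0 0 0) = B := by
  rw [Affine.slope_of_Y_ne rfl (by rw [tateCurve_negY_zero]; exact hB.symm)]
  simp [Affine.addX, tateCurve]

end TateCurve

open Classical in
theorem tateCurve_elliptic_and_point_general {k : Type*} [Field k] (B C : k)
    (hD : B ^ 3 * (C ^ 4 - 8 * B * C ^ 2 - 3 * C ^ 3 + 16 * B ^ 2 - 20 * B * C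
      + 3 * C ^ 2 + B - C) ≠ 0) :
    (tateCurve B C).Δ ≠ 0 ∧
      ∃ h : (tateCurve B C).toAffine.Nonsingular 0 0,
        addOrderOf (WeierstrassCurve.Affine.Point.some _ _ h) ≠ 1 ∧
        addOrderOf (WeierstrassCurve.Affine.Point.some _ _ h) ≠ 2 ∧
        addOrderOf (WeierstrassCurve.Affine.Point.some _ _ h) ≠ 3 := by
  open WeierstrassCurve.Affine in
  have hΔ : (tateCurve B C).Δ ≠ 0 := tateCurve_Δ B C ▸ hD
  have hB : B ≠ 0 := pow_ne_zero_iff three_ne_zero |>.mp (left_ne_zero_of_mul hD)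
  have hy : (0 : k) ≠ (tateCurve B C).toAffine.negY 0 0 := by
    rw [tateCurve_negY_zero]; exact hB.symm
  have h : (tateCurve B C).toAffine.Nonsingular 0 0 :=
    (equation_iff_nonsingular_of_Δ_ne_zero hΔ).mp (tateCurve_equation_zero B C)
  have hx : (tateCurve B C).toAffine.addX 0 0 ((tateCurve B C).toAffine.slope 0 0 0 0) ≠ 0 := by
    rw [tateCurve_addX_double_zero C hB]; exact hB
  refine ⟨hΔ, h, fun h1 => Point.some_ne_zero h (AddMonoid.addOrderOf_eq_one_iff.mp h1), fun h2 => ?_,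
    fun h3 => ?_⟩
  · exact Point.two_nsmul_some_ne_zero h hy (h2 ▸ addOrderOf_nsmul_eq_zero _)
  · exact Point.three_nsmul_some_ne_zero h hy hx (h3 ▸ addOrderOf_nsmul_eq_zero _)

open Classical in
/-- If `D = B³·(C⁴ − 8BC² − 3C³ + 16B² − 20BC + 3C² + B − C) ≠ 0`, then the Tate normal
form defines an elliptic curve (its discriminant is nonzero), the point `P = (0,0)` lies
on the curve, and `P` does not have order `1`, `2` or `3`. -/
theorem tateCurve_elliptic_and_point {k : Type*} [Field k] [CharZero k] (B C : k)
    (hD : B ^ 3 * (C ^ 4 - 8 * B * C ^ 2 - 3 * C ^ 3 + 16 * B ^ 2 - 20 * B * C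
      + 3 * C ^ 2 + B - C) ≠ 0) :
    (tateCurve B C).Δ ≠ 0 ∧
      ∃ h : (tateCurve B C).toAffine.Nonsingular 0 0,
        addOrderOf (WeierstrassCurve.Affine.Point.some _ _ h) ≠ 1 ∧
        addOrderOf (WeierstrassCurve.Affine.Point.some _ _ h) ≠ 2 ∧
        addOrderOf (WeierstrassCurve.Affine.Point.some _ _ h) ≠ 3 :=
  tateCurve_elliptic_and_point_general B C hD
end

section
/- Fix an integer N ≥ 2 and set m = ⌊N/2⌋. For k = 1,…,m define the formal power series g_k ∈ ℤ[[x]] by g_k = (1−x^k)·∏_{n≥1}(1−x^{nN+k})(1−x^{nN−k}). Then the g_k are multiplicatively independent: if ∏_{k=1}^m g_k^{e(k)} = 1 in ℚ((x)) for integers e(k), then all e(k) = 0. -/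
open Finset PowerSeries

/-!
Modulo `x^{k+1}`, the power series congruent to `1` modulo `x^k` form a group on which the
coefficient of `x^k` is additive. For `1 ≤ k ≤ N/2` the series `g_k` is `1 + c_k x^k` modulo
`x^{k+1}` with `c_k = -1`, or `c_k = -2` when `2k = N` (the factor `1 - x^{N-k}` contributes a
second `-x^k`), and `g_j ≡ 1` modulo `x^{k+1}` for `j > k`. So if `k` is least with `e(k) ≠ 0`,
the coefficient of `x^k` in `∏ g_j^{e(j)} = 1` is `e(k) c_k ≠ 0`, a contradiction.
-/

/-- The formal power series `g_k = (1−x^k)·∏_{n≥1}(1−x^{nN+k})(1−x^{nN−k}) ∈ ℤ[[x]]`.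
Since for `1 ≤ k < N` the factors with `n > j` do not affect the coefficient of `x^j`,
the infinite product is defined coefficient-wise by a finite truncated product. -/
noncomputable def siegelSeries (N k : ℕ) : PowerSeries ℤ :=
  PowerSeries.mk fun j =>
    PowerSeries.coeff (R := ℤ) j
      ((1 - X ^ k) * ∏ n ∈ Icc 1 (j + 1), ((1 - X ^ (n * N + k)) * (1 - X ^ (n * N - k))))

/-- The image of `g_k` in the field of formal Laurent series `ℚ((x))`. -/
noncomputable def siegelSeriesL (N k : ℕ) : LaurentSeries ℚ :=
  HahnSeries.ofPowerSeries ℤ ℚ (PowerSeries.map (Int.castRingHom ℚ) (siegelSeries N k))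

namespace PowerSeries

section OneAddMonomialMod

variable {R : Type*} [CommRing R] {k : ℕ} {a b : R} {φ ψ : R⟦X⟧}

def EqOneAddMonomialMod (k : ℕ) (a : R) (φ : R⟦X⟧) : Prop :=
  X ^ (k + 1) ∣ φ - (1 + C a * X ^ k)

namespace EqOneAddMonomialMod

theorem one : EqOneAddMonomialMod k 0 (1 : R⟦X⟧) := by
  simp [EqOneAddMonomialMod]

theorem one_sub_X_pow_self : EqOneAddMonomialMod k (-1) (1 - X ^ k : R⟦X⟧) := by
  simp [EqOneAddMonomialMod, sub_eq_add_neg]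

theorem one_sub_X_pow_of_lt {s : ℕ} (h : k < s) : EqOneAddMonomialMod k 0 (1 - X ^ s : R⟦X⟧) := by
  simpa [EqOneAddMonomialMod] using pow_dvd_pow (X : R⟦X⟧) h

theorem of_lt {j : ℕ} (hjk : j < k) (h : EqOneAddMonomialMod k a φ) :
    EqOneAddMonomialMod j 0 φ := by
  have hφ : φ - 1 = (φ - (1 + C a * X ^ k)) + C a * X ^ k := by ring
  simpa [EqOneAddMonomialMod, hφ] using
    dvd_add ((pow_dvd_pow X (by omega)).trans h) (dvd_mul_of_dvd_right (pow_dvd_pow X hjk) _)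

theorem coeff_eq (hk : k ≠ 0) (h : EqOneAddMonomialMod k a φ) : coeff k φ = a := by
  have := X_pow_dvd_iff.mp h k k.lt_succ_self
  simpa [coeff_one, hk, sub_eq_zero] using this

theorem constantCoeff_eq (hk : k ≠ 0) (h : EqOneAddMonomialMod k a φ) : constantCoeff φ = 1 := by
  have := X_pow_dvd_iff.mp h 0 k.succ_pos
  simpa [coeff_X_pow, hk, sub_eq_zero] using this

theorem isUnit (hk : k ≠ 0) (h : EqOneAddMonomialMod k a φ) : IsUnit φ :=
  isUnit_iff_constantCoeff.mpr (by simp [h.constantCoeff_eq hk])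

theorem mul (hk : k ≠ 0) (hφ : EqOneAddMonomialMod k a φ) (hψ : EqOneAddMonomialMod k b ψ) :
    EqOneAddMonomialMod k (a + b) (φ * ψ) := by
  have hsplit : φ * ψ - (1 + C (a + b) * X ^ k) = (φ - (1 + C a * X ^ k)) * ψ +
      (1 + C a * X ^ k) * (ψ - (1 + C b * X ^ k)) + C (a * b) * X ^ (k + k) := by
    simp only [map_add, map_mul, pow_add]; ring
  rw [EqOneAddMonomialMod, hsplit]
  exact dvd_add (dvd_add (dvd_mul_of_dvd_left hφ _) (dvd_mul_of_dvd_right hψ _))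
    (dvd_mul_of_dvd_right (pow_dvd_pow X (by omega)) _)

theorem prod (hk : k ≠ 0) {ι : Type*} {s : Finset ι} {f : ι → R⟦X⟧} {c : ι → R}
    (h : ∀ i ∈ s, EqOneAddMonomialMod k (c i) (f i)) :
    EqOneAddMonomialMod k (∑ i ∈ s, c i) (∏ i ∈ s, f i) := by
  classical
  induction s using Finset.induction_on with
  | empty => simpa using one
  | insert i s hi ih =>
    rw [prod_insert hi, sum_insert hi]
    exact (h i (mem_insert_self i s)).mul hk (ih fun j hj => h j (mem_insert_of_mem hj))

theorem inv (hk : k ≠ 0) {u : R⟦X⟧ˣ} (h : EqOneAddMonomialMod k a u) :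
    EqOneAddMonomialMod k (-a) ↑u⁻¹ := by
  have hsplit : (↑u⁻¹ : R⟦X⟧) - (1 + C (-a) * X ^ k) = (↑u⁻¹ : R⟦X⟧) *
      (-((u : R⟦X⟧) - (1 + C a * X ^ k)) * (1 - C a * X ^ k) + C (a * a) * X ^ (k + k)) := by
    simp only [map_neg, map_mul, pow_add]
    linear_combination (1 - C a * X ^ k) * u.inv_mul
  rw [EqOneAddMonomialMod, hsplit]
  exact dvd_mul_of_dvd_right (dvd_add (dvd_mul_of_dvd_left (dvd_neg.mpr h) _)
    (dvd_mul_of_dvd_right (pow_dvd_pow X (by omega)) _)) _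

theorem zpow (hk : k ≠ 0) {u : R⟦X⟧ˣ} (h : EqOneAddMonomialMod k a u) (n : ℤ) :
    EqOneAddMonomialMod k (n • a) ↑(u ^ n) := by
  induction n with
  | zero => simpa using one
  | succ n ih =>
    rw [zpow_add_one, Units.val_mul, add_smul, one_smul]
    exact ih.mul hk h
  | pred n ih =>
    rw [zpow_sub_one, Units.val_mul, sub_smul, one_smul, sub_eq_add_neg]
    exact ih.mul hk (h.inv hk)

theorem of_forall_coeff_eq {ψ : ℕ → R⟦X⟧} (hψ : ∀ j, EqOneAddMonomialMod k a (ψ j))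
    (h : ∀ j, coeff j φ = coeff j (ψ j)) : EqOneAddMonomialMod k a φ := by
  refine X_pow_dvd_iff.mpr fun j hj => ?_
  rw [map_sub, h, ← map_sub]
  exact X_pow_dvd_iff.mp (hψ j) j hj

end EqOneAddMonomialMod

theorem eq_zero_of_prod_zpow_eq_one [NoZeroSMulDivisors ℤ R] {s : Finset ℕ} (hs : 0 ∉ s)
    {u : ℕ → R⟦X⟧ˣ} {c : ℕ → R} (hu : ∀ k ∈ s, EqOneAddMonomialMod k (c k) ↑(u k))
    (hc : ∀ k ∈ s, c k ≠ 0) {e : ℕ → ℤ} (h : ∏ k ∈ s, u k ^ e k = 1) : ∀ k ∈ s, e k = 0 := by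
  intro k hk
  induction k using Nat.strong_induction_on with
  | _ k ih =>
  have hk0 : k ≠ 0 := ne_of_mem_of_not_mem hk hs
  have hfactor : ∀ j ∈ s,
      EqOneAddMonomialMod k (if j = k then e k • c k else 0) ↑(u j ^ e j) := by
    intro j hj
    rcases lt_trichotomy j k with hjk | rfl | hkj
    · simpa [hjk.ne, ih j hjk hj] using EqOneAddMonomialMod.one
    · simpa using (hu j hj).zpow hk0 (e j)
    · simpa [hkj.ne'] using ((hu j hj).of_lt hkj).zpow hk0 (e j)
  have hprod := EqOneAddMonomialMod.prod hk0 hfactor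
  rw [sum_ite_eq' s k, if_pos hk, ← Units.coe_prod, h, Units.val_one] at hprod
  have hcoeff := hprod.coeff_eq hk0
  rw [coeff_one, if_neg hk0] at hcoeff
  exact (smul_eq_zero.mp hcoeff.symm).resolve_right (hc k hk)

end OneAddMonomialMod

end PowerSeries

theorem RingHom.map_units_zpow {A K : Type*} [Semiring A] [DivisionRing K] (f : A →+* K)
    (u : Aˣ) (n : ℤ) : f ↑(u ^ n) = f ↑u ^ n :=
  calc f ↑(u ^ n) = ↑(Units.map (f : A →* K) u ^ n) := by rw [← map_zpow]; rfl
    _ = f ↑u ^ n := Units.val_zpow_eq_zpow_val _ _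

open PowerSeries.EqOneAddMonomialMod in
theorem siegelSeries_eqOneAddMonomialMod {N k : ℕ} (hk : k ≠ 0) (hkN : 2 * k ≤ N) :
    EqOneAddMonomialMod k (if 2 * k = N then -2 else -1) (siegelSeries N k) := by
  have hfirst : EqOneAddMonomialMod k (if 2 * k = N then -1 else 0)
      ((1 - X ^ (1 * N + k)) * (1 - X ^ (1 * N - k)) : ℤ⟦X⟧) := by
    have hplus : EqOneAddMonomialMod k 0 (1 - X ^ (1 * N + k) : ℤ⟦X⟧) :=
      one_sub_X_pow_of_lt (by omega)
    split_ifs with hN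
    · have hminus : EqOneAddMonomialMod k (-1) (1 - X ^ (1 * N - k) : ℤ⟦X⟧) := by
        rw [show 1 * N - k = k by omega]
        exact one_sub_X_pow_self
      simpa using hplus.mul hk hminus
    · simpa using hplus.mul hk (one_sub_X_pow_of_lt (by omega))
  have hrest (T : ℕ) : EqOneAddMonomialMod k 0
      (∏ n ∈ Ioc 1 T, ((1 - X ^ (n * N + k)) * (1 - X ^ (n * N - k))) : ℤ⟦X⟧) := by
    have hprod := EqOneAddMonomialMod.prod hk (s := Ioc 1 T) (c := fun _ => (0 : ℤ) + 0)
      fun n hn => by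
        have : 2 * N ≤ n * N := Nat.mul_le_mul_right N (mem_Ioc.mp hn).1
        exact (one_sub_X_pow_of_lt (s := n * N + k) (by omega)).mul hk
          (one_sub_X_pow_of_lt (s := n * N - k) (by omega))
    simpa using hprod
  refine of_forall_coeff_eq (fun j => ?_) (fun j => coeff_mk _ _)
  rw [Icc_eq_cons_Ioc (by omega), prod_cons]
  convert one_sub_X_pow_self.mul hk (hfirst.mul hk (hrest (j + 1))) using 1
  split_ifs <;> norm_num

theorem siegelSeries_mul_independent_general (N : ℕ) (m : ℕ) (hm : m = N / 2)
    (e : ℕ → ℤ) (h : ∏ k ∈ Icc 1 m, siegelSeriesL N k ^ e k = 1) :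
    ∀ k ∈ Icc 1 m, e k = 0 := by
  have hcong (k : ℕ) (hk : k ∈ Icc 1 m) :
      EqOneAddMonomialMod k (if 2 * k = N then -2 else -1) (siegelSeries N k) := by
    rw [mem_Icc] at hk
    exact siegelSeries_eqOneAddMonomialMod (by omega) (by omega)
  choose! u hu using fun k hk => (hcong k hk).isUnit (by rw [mem_Icc] at hk; omega)
  let toLaurent : ℤ⟦X⟧ →+* LaurentSeries ℚ :=
    (HahnSeries.ofPowerSeries ℤ ℚ).comp (PowerSeries.map (Int.castRingHom ℚ))
  have hinj : Function.Injective toLaurent := by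
    rw [RingHom.coe_comp]
    exact HahnSeries.ofPowerSeries_injective.comp (map_injective _ Int.cast_injective)
  have hprod : ∏ k ∈ Icc 1 m, u k ^ e k = 1 := by
    refine Units.ext (hinj ?_)
    rw [Units.val_one, map_one, ← h, Units.coe_prod, map_prod]
    refine prod_congr rfl fun k hk => ?_
    rw [toLaurent.map_units_zpow, hu k hk]
    rfl
  exact eq_zero_of_prod_zpow_eq_one (by simp) (fun k hk => hu k hk ▸ hcong k hk)
    (fun k _ => by split_ifs <;> norm_num) hprod

/-- The series `g_k`, `k = 1, …, m = ⌊N/2⌋`, are multiplicatively independent: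
if `∏ g_k^{e(k)} = 1` in `ℚ((x))` for integers `e(k)`, then all `e(k) = 0`. -/
theorem siegelSeries_mul_independent (N : ℕ) (hN : 2 ≤ N) (m : ℕ) (hm : m = N / 2)
    (e : ℕ → ℤ) (h : ∏ k ∈ Icc 1 m, siegelSeriesL N k ^ e k = 1) :
    ∀ k ∈ Icc 1 m, e k = 0 :=
  siegelSeries_mul_independent_general N m hm e h
end

section
/- Let G be the subgroup of the multiplicative group ℚ(B,C)* generated modulo ℚ* by F₂ = B⁴/D, F₃ = B, and F₄,…,Fₙ (n ≥ 3), and H the subgroup generated modulo ℚ* by B, D, P₄,…,Pₙ, where each Fₖ (k ≥ 4) is obtained from Pₖ by removing all irreducible factors in common with D and with P_d for d < k. Assuming each Fₖ (k ≥ 4) is irreducible in ℚ[B,C], we have G = H. -/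
open MvPolynomial Polynomial

/-- The polynomial ring `ℚ[B,C]`, with `B = X 0` and `C = X 1`. -/
noncomputable abbrev RBC := MvPolynomial (Fin 2) ℚ

/-- The field `ℚ(B,C)` of rational functions. -/
noncomputable abbrev KBC := FractionRing RBC

noncomputable def Bp : RBC := MvPolynomial.X 0
noncomputable def Cp : RBC := MvPolynomial.X 1

/-- The discriminant `D = B³·(C⁴ − 8BC² − 3C³ + 16B² − 20BC + 3C² + B − C)`. -/
noncomputable def Dp : RBC :=
  Bp ^ 3 * (Cp ^ 4 - 8 * Bp * Cp ^ 2 - 3 * Cp ^ 3 + 16 * Bp ^ 2 - 20 * Bp * Cp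
    + 3 * Cp ^ 2 + Bp - Cp)

/-- The Tate normal form curve `Y² + (1−C)XY − BY = X³ − BX²` over `ℚ[B,C]`. -/
noncomputable def tateCurvePoly : WeierstrassCurve RBC :=
  { a₁ := 1 - Cp, a₂ := -Bp, a₃ := -Bp, a₄ := 0, a₆ := 0 }

/-- `Pₙ ∈ ℚ[B,C]`: the `n`-division polynomial of the Tate normal form evaluated at
the point `(0,0)`. -/
noncomputable def Pdiv (n : ℕ) : RBC :=
  Polynomial.eval (0 : RBC)
    (Polynomial.eval (0 : Polynomial RBC) (tateCurvePoly.ψ (n : ℤ)))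

/-- The subgroup of `ℚ(B,C)*` of nonzero rational constants. -/
def ratConsts : Set KBCˣ := {u : KBCˣ | ∃ q : ℚ, (u : KBC) = (q : KBC)}

/-!
`ℚ[B,C]` is a UFD whose units are the nonzero rational constants, so a subgroup of `ℚ(B,C)*`
containing `ℚ*` contains a nonzero polynomial as soon as it contains all of its prime factors,
and it contains `p` once it contains `p * q` and `q`. Here `D = B³E` with `B` and `E` irreducible
(by Gauss's lemma, since `E` is a quadratic in `B` over `ℚ[C]` whose discriminant `(8C + 1)³` has
odd degree, hence is not a square in `ℚ(C)`), and `P₁, P₂, P₃ = 1, -B, -B³`. In either subgroup,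
by strong induction on `k`, every prime factor of `Pₖ` is `Fₖ` or a factor of `D` or of an earlier
`P_d`, and both `Fₖ` and `Pₖ` lie in the subgroup: one of them is a generator, and the cofactor
`Pₖ / Fₖ` is built from earlier primes.
-/

namespace Submonoid

variable {R : Type*}

theorem mem_of_associated [CommMonoid R] {S : Submonoid R} (hU : ∀ u : R, IsUnit u → u ∈ S)
    {p q : R} (h : Associated p q) (hp : p ∈ S) : q ∈ S := by
  obtain ⟨u, rfl⟩ := h
  exact mul_mem hp (hU _ u.isUnit)

theorem mem_of_dvd_irreducible [CommMonoid R] {S : Submonoid R} (hU : ∀ u : R, IsUnit u → u ∈ S)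
    {p q : R} (hp : Irreducible p) (hpS : p ∈ S) (hq : Irreducible q) (h : q ∣ p) : q ∈ S :=
  mem_of_associated hU (hq.associated_of_dvd hp h).symm hpS

theorem mem_of_forall_prime_dvd [CommMonoidWithZero R] [UniqueFactorizationMonoid R]
    {S : Submonoid R} (hU : ∀ u : R, IsUnit u → u ∈ S) {p : R} (hp : p ≠ 0)
    (h : ∀ q : R, Prime q → q ∣ p → q ∈ S) : p ∈ S := by
  induction p using UniqueFactorizationMonoid.induction_on_prime with
  | h₁ => exact absurd rfl hp
  | h₂ u hu => exact hU u hu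
  | h₃ a q ha hq ih =>
    exact mul_mem (h q hq (dvd_mul_right q a))
      (ih (right_ne_zero_of_mul hp) fun r hr hra => h r hr (hra.mul_left q))

end Submonoid

namespace Subgroup

variable (R : Type*) {K : Type*} [CommRing R] [Field K] [Algebra R K]

def algebraMapPreimage (H : Subgroup Kˣ) : Submonoid R :=
  (H.toSubmonoid.map (Units.coeHom K)).comap (algebraMap R K).toMonoidHom

variable {R} {H : Subgroup Kˣ} {p q : R} {u : Kˣ}

theorem mem_algebraMapPreimage :
    p ∈ H.algebraMapPreimage R ↔ ∃ u ∈ H, (u : K) = algebraMap R K p := Iff.rfl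

theorem mem_of_val_eq (hp : p ∈ H.algebraMapPreimage R) (hu : (u : K) = algebraMap R K p) :
    u ∈ H := by
  obtain ⟨v, hv, hvp⟩ := mem_algebraMapPreimage.mp hp
  rwa [Units.ext (hu.trans hvp.symm)]

theorem mem_algebraMapPreimage_of_forall [IsDomain R] [IsFractionRing R K] (hp : p ≠ 0)
    (h : ∀ u : Kˣ, (u : K) = algebraMap R K p → u ∈ H) : p ∈ H.algebraMapPreimage R := by
  have hp' : algebraMap R K p ≠ 0 :=
    IsFractionRing.to_map_ne_zero_of_mem_nonZeroDivisors (mem_nonZeroDivisors_of_ne_zero hp)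
  exact mem_algebraMapPreimage.mpr ⟨Units.mk0 _ hp', h _ rfl, rfl⟩

theorem mem_algebraMapPreimage_of_val_mul_eq (hu : u ∈ H) (hq : q ∈ H.algebraMapPreimage R)
    (h : (u : K) * algebraMap R K p = algebraMap R K q) : p ∈ H.algebraMapPreimage R := by
  obtain ⟨v, hv, hvq⟩ := mem_algebraMapPreimage.mp hq
  refine mem_algebraMapPreimage.mpr ⟨u⁻¹ * v, mul_mem (inv_mem hu) hv, ?_⟩
  rw [Units.val_mul, hvq, ← h, ← mul_assoc, Units.inv_mul, one_mul]

theorem mem_algebraMapPreimage_of_mul_mem (hq : q ∈ H.algebraMapPreimage R)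
    (hqp : q * p ∈ H.algebraMapPreimage R) : p ∈ H.algebraMapPreimage R := by
  obtain ⟨v, hv, hvq⟩ := mem_algebraMapPreimage.mp hq
  exact mem_algebraMapPreimage_of_val_mul_eq hv hqp (by rw [hvq, map_mul])

theorem mem_of_val_mul_algebraMap_eq (hp : p ∈ H.algebraMapPreimage R)
    (hq : q ∈ H.algebraMapPreimage R) (h : (u : K) * algebraMap R K p = algebraMap R K q) :
    u ∈ H := by
  obtain ⟨v, hv, hvp⟩ := mem_algebraMapPreimage.mp hp
  obtain ⟨w, hw, hwq⟩ := mem_algebraMapPreimage.mp hq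
  have : u = w * v⁻¹ := by
    rw [eq_mul_inv_iff_mul_eq]; ext; rw [Units.val_mul, hvp, hwq, h]
  rw [this]; exact mul_mem hw (inv_mem hv)

end Subgroup

theorem Polynomial.not_isSquare_algebraMap_of_odd_natDegree {A K : Type*} [CommRing A]
    [IsDomain A] [Field K] [Algebra A[X] K] [IsFractionRing A[X] K] {p : A[X]}
    (hp : Odd p.natDegree) :
    ¬IsSquare (algebraMap A[X] K p) := by
  rintro ⟨s, hs⟩
  obtain ⟨a, b, hb, rfl⟩ := IsFractionRing.div_surjective (A := A[X]) s
  have hb0 : b ≠ 0 := nonZeroDivisors.ne_zero hb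
  have hp0 : p ≠ 0 := by rintro rfl; simp at hp
  have hab : p * (b * b) = a * a := by
    apply IsFractionRing.injective A[X] K
    have : algebraMap A[X] K b ≠ 0 := IsFractionRing.to_map_ne_zero_of_mem_nonZeroDivisors hb
    rw [map_mul, map_mul, map_mul, hs]
    field_simp
  have ha0 : a ≠ 0 := by
    rintro rfl
    simp [hp0, hb0] at hab
  have := congrArg natDegree hab
  rw [natDegree_mul hp0 (mul_ne_zero hb0 hb0), natDegree_mul hb0 hb0,
    natDegree_mul ha0 ha0] at this
  obtain ⟨m, hm⟩ := hp
  omega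

theorem Polynomial.irreducible_quadratic_of_not_isSquare_discrim {A K : Type*} [CommRing A]
    [IsDomain A] [IsGCDMonoid A] [Field K] [Algebra A K] [IsFractionRing A K] {a b c : A}
    (ha : IsUnit a) (h : ¬IsSquare (algebraMap A K (discrim a b c))) :
    Irreducible (C a * X ^ 2 + C b * X + C c) := by
  have hprim : (C a * X ^ 2 + C b * X + C c).IsPrimitive := by
    rw [isPrimitive_iff_isUnit_of_C_dvd]
    intro r hr
    refine isUnit_of_dvd_unit ?_ ha
    simpa using (C_dvd_iff_dvd_coeff r _).mp hr 2
  rw [hprim.irreducible_iff_irreducible_map_fraction_map (K := K)]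
  have ha' : algebraMap A K a ≠ 0 := (ha.map _).ne_zero
  apply irreducible_of_degree_le_three_of_not_isRoot
  · simp [natDegree_quadratic ha']
  · intro x hx
    refine h ⟨2 * algebraMap A K a * x + algebraMap A K b, ?_⟩
    rw [← sq, ← discrim_eq_sq_of_quadratic_eq_zero (c := algebraMap A K c)]
    · simp [discrim, map_ofNat]
    · simpa [sq] using hx

noncomputable def Ep : RBC :=
  Cp ^ 4 - 8 * Bp * Cp ^ 2 - 3 * Cp ^ 3 + 16 * Bp ^ 2 - 20 * Bp * Cp + 3 * Cp ^ 2 + Bp - Cp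

theorem Dp_eq : Dp = Bp ^ 3 * Ep := rfl

theorem prime_Bp : Prime Bp := MvPolynomial.X_prime

/-- `ℚ[B,C] ≃ ℚ[C][B]`, with `B` as the outer variable. -/
noncomputable def equivPolynomialPolynomial : RBC ≃ₐ[ℚ] ℚ[X][X] :=
  (MvPolynomial.finSuccEquiv ℚ 1).trans <| Polynomial.mapAlgEquiv <|
    (MvPolynomial.finSuccEquiv ℚ 0).trans <| Polynomial.mapAlgEquiv <|
      MvPolynomial.isEmptyAlgEquiv ℚ (Fin 0)

theorem equivPolynomialPolynomial_Ep :
    equivPolynomialPolynomial Ep = Polynomial.C 16 * Polynomial.X ^ 2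
      + Polynomial.C (1 - 20 * Polynomial.X - 8 * Polynomial.X ^ 2) * Polynomial.X
      + Polynomial.C
        (Polynomial.X ^ 4 - 3 * Polynomial.X ^ 3 + 3 * Polynomial.X ^ 2 - Polynomial.X) := by
  have hB : equivPolynomialPolynomial Bp = Polynomial.X := by
    simp [equivPolynomialPolynomial, Bp, MvPolynomial.finSuccEquiv_X_zero]
  have hC : equivPolynomialPolynomial Cp = Polynomial.C Polynomial.X := by
    have h1 : (MvPolynomial.X 1 : RBC) = MvPolynomial.X (Fin.succ 0) := rfl
    simp [equivPolynomialPolynomial, Cp, h1, MvPolynomial.finSuccEquiv_X_succ,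
      MvPolynomial.finSuccEquiv_X_zero]
  simp only [Ep, map_add, map_sub, map_mul, map_pow, map_ofNat, map_one, hB, hC]
  ring

theorem irreducible_Ep : Irreducible Ep := by
  rw [← MulEquiv.irreducible_iff equivPolynomialPolynomial, equivPolynomialPolynomial_Ep]
  have h16 : IsUnit (16 : ℚ[X]) := by
    rw [← map_ofNat Polynomial.C 16]; exact isUnit_C.mpr (by norm_num)
  refine irreducible_quadratic_of_not_isSquare_discrim (K := FractionRing ℚ[X]) h16 ?_
  have hdiscrim : discrim 16 (1 - 20 * Polynomial.X - 8 * Polynomial.X ^ 2)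
      (Polynomial.X ^ 4 - 3 * Polynomial.X ^ 3 + 3 * Polynomial.X ^ 2 - Polynomial.X)
      = (8 * Polynomial.X + 1 : ℚ[X]) ^ 3 := by
    rw [discrim]; ring
  rw [hdiscrim]
  apply not_isSquare_algebraMap_of_odd_natDegree
  have : (8 * Polynomial.X + 1 : ℚ[X]).natDegree = 1 := by compute_degree!
  rw [natDegree_pow, this]
  decide

theorem Dp_ne_zero : Dp ≠ 0 :=
  Dp_eq ▸ mul_ne_zero (pow_ne_zero 3 prime_Bp.ne_zero) irreducible_Ep.ne_zero

theorem Pdiv_one : Pdiv 1 = 1 := by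
  simp [Pdiv, WeierstrassCurve.ψ_one]

theorem Pdiv_two : Pdiv 2 = -Bp := by
  simp [Pdiv, WeierstrassCurve.ψ₂, WeierstrassCurve.Affine.polynomialY, tateCurvePoly]

theorem Pdiv_three : Pdiv 3 = -Bp ^ 3 := by
  simp [Pdiv, WeierstrassCurve.Ψ₃, WeierstrassCurve.b₂, WeierstrassCurve.b₄,
    WeierstrassCurve.b₆, WeierstrassCurve.b₈, tateCurvePoly]
  ring

theorem mem_algebraMapPreimage_of_isUnit {H : Subgroup KBCˣ} (hH : ratConsts ⊆ H) (p : RBC)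
    (hp : IsUnit p) : p ∈ H.algebraMapPreimage RBC := by
  obtain ⟨c, hc, rfl⟩ := MvPolynomial.isUnit_iff_eq_C_of_isReduced.mp hp
  refine Subgroup.mem_algebraMapPreimage_of_forall (by simpa using hc.ne_zero) fun u hu =>
    hH ⟨c, ?_⟩
  rw [hu, ← MvPolynomial.algebraMap_eq, ← IsScalarTower.algebraMap_apply, eq_ratCast]

/-- The paper's `Fₖ`: what remains of `Pₖ` after removing the irreducible factors it shares
with `D` and with the `P_d`, `d < k`. -/
def IsPrimitiveDivisor (k : ℕ) (f : RBC) : Prop :=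
  Irreducible f ∧
  (∃ g : RBC, Pdiv k = f * g ∧
    ∀ q : RBC, Irreducible q → q ∣ g → q ∣ Dp ∨ ∃ d, 1 ≤ d ∧ d < k ∧ q ∣ Pdiv d) ∧
  (∀ q : RBC, Irreducible q → q ∣ f → ¬q ∣ Dp ∧ ∀ d, 1 ≤ d → d < k → ¬q ∣ Pdiv d)

namespace IsPrimitiveDivisor

variable {k : ℕ} {f : RBC}

theorem dvd (h : IsPrimitiveDivisor k f) : f ∣ Pdiv k :=
  let ⟨_, ⟨g, hPk, _⟩, _⟩ := h
  ⟨g, hPk⟩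

/-- If `Pdiv k` were `0`, then `f` would divide the cofactor `0` and hence be an old factor. -/
theorem Pdiv_ne_zero (h : IsPrimitiveDivisor k f) : Pdiv k ≠ 0 := by
  obtain ⟨hf, ⟨g, hPk, hg⟩, hnew⟩ := h
  intro hP
  have hg0 : g = 0 := (mul_eq_zero.mp (hPk ▸ hP)).resolve_left hf.ne_zero
  obtain ⟨hfD, hfP⟩ := hnew f hf dvd_rfl
  rcases hg f hf (hg0 ▸ dvd_zero f) with hD | ⟨d, hd1, hdk, hd⟩
  · exact hfD hD
  · exact hfP d hd1 hdk hd

theorem prime_dvd_mem (h : IsPrimitiveDivisor k f) {H : Subgroup KBCˣ} (hH : ratConsts ⊆ H)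
    (hD : ∀ q, Prime q → q ∣ Dp → q ∈ H.algebraMapPreimage RBC)
    (hlow : ∀ d, 1 ≤ d → d < k → ∀ q, Prime q → q ∣ Pdiv d → q ∈ H.algebraMapPreimage RBC)
    (hgen : f ∈ H.algebraMapPreimage RBC ∨ Pdiv k ∈ H.algebraMapPreimage RBC)
    {q : RBC} (hq : Prime q) (hqP : q ∣ Pdiv k) : q ∈ H.algebraMapPreimage RBC := by
  have hU := mem_algebraMapPreimage_of_isUnit hH
  have hP0 := h.Pdiv_ne_zero
  obtain ⟨hf, ⟨g, hPk, hg⟩, -⟩ := h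
  have hgq : ∀ q, Prime q → q ∣ g → q ∈ H.algebraMapPreimage RBC := fun q hq hqg =>
    (hg q hq.irreducible hqg).elim (hD q hq) fun ⟨d, hd1, hdk, hqd⟩ => hlow d hd1 hdk q hq hqd
  have hgS : g ∈ H.algebraMapPreimage RBC :=
    Submonoid.mem_of_forall_prime_dvd hU (right_ne_zero_of_mul (hPk ▸ hP0)) hgq
  have hfS : f ∈ H.algebraMapPreimage RBC :=
    hgen.elim id fun hP =>
      Subgroup.mem_algebraMapPreimage_of_mul_mem hgS (mul_comm f g ▸ hPk ▸ hP)
  rcases hq.dvd_or_dvd (hPk ▸ hqP) with hqf | hqg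
  · exact Submonoid.mem_of_dvd_irreducible hU hf hfS hq.irreducible hqf
  · exact hgq q hq hqg

end IsPrimitiveDivisor

section

variable {n : ℕ} {F : ℕ → RBC} {H : Subgroup KBCˣ}

theorem prime_dvd_Pdiv_mem (hH : ratConsts ⊆ H) (hB : Bp ∈ H.algebraMapPreimage RBC)
    (hE : Ep ∈ H.algebraMapPreimage RBC)
    (hF : ∀ k, 4 ≤ k → k ≤ n → IsPrimitiveDivisor k (F k))
    (hgen : ∀ k, 4 ≤ k → k ≤ n →
      F k ∈ H.algebraMapPreimage RBC ∨ Pdiv k ∈ H.algebraMapPreimage RBC)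
    {d : ℕ} (hd1 : 1 ≤ d) (hdn : d ≤ n) {q : RBC} (hq : Prime q) (hqd : q ∣ Pdiv d) :
    q ∈ H.algebraMapPreimage RBC := by
  have hU := mem_algebraMapPreimage_of_isUnit hH
  have hBq : ∀ q, Prime q → q ∣ Bp ^ 3 → q ∈ H.algebraMapPreimage RBC := fun q hq h =>
    Submonoid.mem_of_dvd_irreducible hU prime_Bp.irreducible hB hq.irreducible
      (hq.dvd_of_dvd_pow h)
  have hD : ∀ q, Prime q → q ∣ Dp → q ∈ H.algebraMapPreimage RBC := fun q hq h =>
    (hq.dvd_or_dvd (Dp_eq ▸ h)).elim (hBq q hq)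
      (Submonoid.mem_of_dvd_irreducible hU irreducible_Ep hE hq.irreducible)
  induction d using Nat.strong_induction_on generalizing q with
  | _ d ih =>
    by_cases hd4 : d < 4
    · interval_cases d
      · rw [Pdiv_one] at hqd
        exact absurd (isUnit_of_dvd_one hqd) hq.not_isUnit
      · rw [Pdiv_two, dvd_neg] at hqd
        exact hBq q hq (hqd.trans (dvd_pow_self _ three_ne_zero))
      · rw [Pdiv_three, dvd_neg] at hqd
        exact hBq q hq hqd
    · exact (hF d (by omega) hdn).prime_dvd_mem hH hD
        (fun d' hd1' hd' q hq hqd => ih d' hd' hd1' (by omega) hq hqd)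
        (hgen d (by omega) hdn) hq hqd

end

noncomputable def subgroupF (n : ℕ) (F : ℕ → RBC) : Subgroup KBCˣ :=
  Subgroup.closure (ratConsts ∪
    {u : KBCˣ | (u : KBC) * algebraMap RBC KBC Dp = algebraMap RBC KBC Bp ^ 4 ∨
      (u : KBC) = algebraMap RBC KBC (F 3) ∨
      ∃ k, 4 ≤ k ∧ k ≤ n ∧ (u : KBC) = algebraMap RBC KBC (F k)})

noncomputable def subgroupP (n : ℕ) : Subgroup KBCˣ :=
  Subgroup.closure (ratConsts ∪
    {u : KBCˣ | (u : KBC) = algebraMap RBC KBC Bp ∨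
      (u : KBC) = algebraMap RBC KBC Dp ∨
      ∃ k, 4 ≤ k ∧ k ≤ n ∧ (u : KBC) = algebraMap RBC KBC (Pdiv k)})

section

variable {n : ℕ} {F : ℕ → RBC}

theorem subgroupF_le_subgroupP (hF3 : F 3 = Bp)
    (hF : ∀ k, 4 ≤ k → k ≤ n → IsPrimitiveDivisor k (F k)) : subgroupF n F ≤ subgroupP n := by
  have hH : ratConsts ⊆ subgroupP n := fun u hu => Subgroup.subset_closure (Or.inl hu)
  have hB : Bp ∈ (subgroupP n).algebraMapPreimage RBC :=
    Subgroup.mem_algebraMapPreimage_of_forall prime_Bp.ne_zero fun u hu =>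
      Subgroup.subset_closure (Or.inr (Or.inl hu))
  have hD : Dp ∈ (subgroupP n).algebraMapPreimage RBC :=
    Subgroup.mem_algebraMapPreimage_of_forall Dp_ne_zero fun u hu =>
      Subgroup.subset_closure (Or.inr (Or.inr (Or.inl hu)))
  have hE : Ep ∈ (subgroupP n).algebraMapPreimage RBC :=
    Subgroup.mem_algebraMapPreimage_of_mul_mem (pow_mem hB 3) (Dp_eq ▸ hD)
  have hP : ∀ k, 4 ≤ k → k ≤ n → Pdiv k ∈ (subgroupP n).algebraMapPreimage RBC :=
    fun k h4 hk => Subgroup.mem_algebraMapPreimage_of_forall (hF k h4 hk).Pdiv_ne_zero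
      fun u hu => Subgroup.subset_closure (Or.inr (Or.inr (Or.inr ⟨k, h4, hk, hu⟩)))
  rw [subgroupF, Subgroup.closure_le]
  rintro u (hu | hu | hu | ⟨k, h4, hk, hu⟩)
  · exact hH hu
  · exact Subgroup.mem_of_val_mul_algebraMap_eq hD (pow_mem hB 4) (by rw [hu, map_pow])
  · exact Subgroup.mem_of_val_eq (hF3 ▸ hB) hu
  · refine Subgroup.mem_of_val_eq ?_ hu
    exact prime_dvd_Pdiv_mem hH hB hE hF (fun k h4 hk => Or.inr (hP k h4 hk)) (by omega) hk
      (hF k h4 hk).1.prime (hF k h4 hk).dvd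

theorem subgroupP_le_subgroupF (hF3 : F 3 = Bp)
    (hF : ∀ k, 4 ≤ k → k ≤ n → IsPrimitiveDivisor k (F k)) : subgroupP n ≤ subgroupF n F := by
  have hH : ratConsts ⊆ subgroupF n F := fun u hu => Subgroup.subset_closure (Or.inl hu)
  have hB : Bp ∈ (subgroupF n F).algebraMapPreimage RBC :=
    Subgroup.mem_algebraMapPreimage_of_forall prime_Bp.ne_zero fun u hu =>
      Subgroup.subset_closure (Or.inr (Or.inr (Or.inl (hF3 ▸ hu))))
  have hD : Dp ∈ (subgroupF n F).algebraMapPreimage RBC := by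
    have hB0 : algebraMap RBC KBC Bp ≠ 0 := by simpa using prime_Bp.ne_zero
    have hD0 : algebraMap RBC KBC Dp ≠ 0 := by simpa using Dp_ne_zero
    let w : KBCˣ := Units.mk0 _ (div_ne_zero (pow_ne_zero 4 hB0) hD0)
    have hw : (w : KBC) * algebraMap RBC KBC Dp = algebraMap RBC KBC Bp ^ 4 :=
      div_mul_cancel₀ _ hD0
    exact Subgroup.mem_algebraMapPreimage_of_val_mul_eq
      (Subgroup.subset_closure (Or.inr (Or.inl hw))) (pow_mem hB 4) (by rw [hw, map_pow])
  have hE : Ep ∈ (subgroupF n F).algebraMapPreimage RBC :=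
    Subgroup.mem_algebraMapPreimage_of_mul_mem (pow_mem hB 3) (Dp_eq ▸ hD)
  have hFmem : ∀ k, 4 ≤ k → k ≤ n → F k ∈ (subgroupF n F).algebraMapPreimage RBC :=
    fun k h4 hk => Subgroup.mem_algebraMapPreimage_of_forall (hF k h4 hk).1.ne_zero
      fun u hu => Subgroup.subset_closure (Or.inr (Or.inr (Or.inr ⟨k, h4, hk, hu⟩)))
  rw [subgroupP, Subgroup.closure_le]
  rintro u (hu | hu | hu | ⟨k, h4, hk, hu⟩)
  · exact hH hu
  · exact Subgroup.mem_of_val_eq hB hu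
  · exact Subgroup.mem_of_val_eq hD hu
  · refine Subgroup.mem_of_val_eq ?_ hu
    have hU := mem_algebraMapPreimage_of_isUnit hH
    refine Submonoid.mem_of_forall_prime_dvd hU (hF k h4 hk).Pdiv_ne_zero fun q hq hqd => ?_
    exact prime_dvd_Pdiv_mem hH hB hE hF (fun k h4 hk => Or.inl (hFmem k h4 hk)) (by omega) hk
      hq hqd

end

theorem subgroup_F_eq_subgroup_P_general (n : ℕ) (F : ℕ → RBC)
    (hF3 : F 3 = Bp)
    (hFk : ∀ k, 4 ≤ k → k ≤ n →
      Irreducible (F k) ∧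
      (∃ G : RBC, Pdiv k = F k * G ∧
        ∀ q : RBC, Irreducible q → q ∣ G →
          q ∣ Dp ∨ ∃ d, 1 ≤ d ∧ d < k ∧ q ∣ Pdiv d) ∧
      (∀ q : RBC, Irreducible q → q ∣ F k →
        ¬q ∣ Dp ∧ ∀ d, 1 ≤ d → d < k → ¬q ∣ Pdiv d)) :
    Subgroup.closure (ratConsts ∪
        {u : KBCˣ | (u : KBC) * algebraMap RBC KBC Dp = algebraMap RBC KBC Bp ^ 4 ∨
          (u : KBC) = algebraMap RBC KBC (F 3) ∨
          ∃ k, 4 ≤ k ∧ k ≤ n ∧ (u : KBC) = algebraMap RBC KBC (F k)}) =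
      Subgroup.closure (ratConsts ∪
        {u : KBCˣ | (u : KBC) = algebraMap RBC KBC Bp ∨
          (u : KBC) = algebraMap RBC KBC Dp ∨
          ∃ k, 4 ≤ k ∧ k ≤ n ∧ (u : KBC) = algebraMap RBC KBC (Pdiv k)}) :=
  le_antisymm (subgroupF_le_subgroupP hF3 hFk) (subgroupP_le_subgroupF hF3 hFk)

/-- Lemma `lem:equivalent`: modulo `ℚ*`, the subgroup of `ℚ(B,C)*` generated by
`F₂ = B⁴/D`, `F₃ = B` and `F₄, …, Fₙ` equals the subgroup generated by
`B`, `D`, `P₄, …, Pₙ`, where each `Fₖ` (`k ≥ 4`) is irreducible and is obtained from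
`Pₖ` by removing all irreducible factors in common with `D` and with `P_d`, `d < k`. -/
theorem subgroup_F_eq_subgroup_P (n : ℕ) (hn : 3 ≤ n) (F : ℕ → RBC)
    (hF3 : F 3 = Bp)
    (hFk : ∀ k, 4 ≤ k → k ≤ n →
      Irreducible (F k) ∧
      (∃ G : RBC, Pdiv k = F k * G ∧
        ∀ q : RBC, Irreducible q → q ∣ G →
          q ∣ Dp ∨ ∃ d, 1 ≤ d ∧ d < k ∧ q ∣ Pdiv d) ∧
      (∀ q : RBC, Irreducible q → q ∣ F k →
        ¬q ∣ Dp ∧ ∀ d, 1 ≤ d → d < k → ¬q ∣ Pdiv d)) :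
    Subgroup.closure (ratConsts ∪
        {u : KBCˣ | (u : KBC) * algebraMap RBC KBC Dp = algebraMap RBC KBC Bp ^ 4 ∨
          (u : KBC) = algebraMap RBC KBC (F 3) ∨
          ∃ k, 4 ≤ k ∧ k ≤ n ∧ (u : KBC) = algebraMap RBC KBC (F k)}) =
      Subgroup.closure (ratConsts ∪
        {u : KBCˣ | (u : KBC) = algebraMap RBC KBC Bp ∨
          (u : KBC) = algebraMap RBC KBC Dp ∨
          ∃ k, 4 ≤ k ∧ k ≤ n ∧ (u : KBC) = algebraMap RBC KBC (Pdiv k)}) :=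
  subgroup_F_eq_subgroup_P_general n F hF3 hFk
end
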